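/- Define, for each j ∈ ℤ, D_{j+1/2} := (F(ρ^{½,−}_{j+1/2}, ρ^{½,+}_{j+1/2}, A^{½}_{j+3/2}) − F(ρ^{½,−}_{j+1/2}, ρ^{½,+}_{j+1/2}, A^{½}_{j+1/2})) − (F(ρ^{½,−}_{j−1/2}, ρ^{½,+}_{j−1/2}, A^{½}_{j+1/2}) − F(ρ^{½,−}_{j−1/2}, ρ^{½,+}_{j−1/2}, A^{½}_{j−1/2})). Assume hypothesis (H2), that all second-order partial derivatives of f are bounded, that Δx ≤ 1, that sup_{k∈ℤ} ρ_k < ∞, and that Σ_{j∈ℤ} |ρ_{j+1} − ρ_j| < ∞. Then there exist constants K₇, K₈ ≥ 0, depending only on f, μ, λ, θ, the mass m and sup_{k∈ℤ} ρ_k (but not on Δx, Δt or on the particular sequence), such that λ·Σ_{j∈ℤ} |D_{j+1/2}| ≤ Δt·K₇ + Δt·K₈·Σ_{j∈ℤ} |ρ_{j+1} − ρ_j|. -/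

import Mathlib

/-!
In `D_{j+1/2}` the viscosity terms of the numerical flux cancel, and what is left splits into
second differences `f(w, A₊) − 2 f(w, A₀) + f(w, A₋)` at the mid-time values `w = ρ^{½}` and mixed
differences `(f(w, A₀) − f(w, A₋)) − (f(w', A₀) − f(w', A₋))` between neighbouring mid-time
values. By (H2) the first kind is `O(M |w|)` times the squared first and the second differences of
`A^{½}`, and the second kind is `O(B |w − w'|)` times a first difference. Since `A^{½}` is a
discrete convolution with the smooth kernel `μ`, its first and second differences are
`O(Δx · m)` and `O(Δx² · m)`. Summing over `j`, `Σ |ρ^{½}| = O(m / Δx)` and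
`Σ |Δρ^{½}| = O(TV(ρ) + m²)`, so `Σ |D| = O(Δx)`, and the factor `λ = Δt / Δx` turns this into
`O(Δt)`.
-/

open MeasureTheory

noncomputable section

/-- minmod limiter of three arguments. -/
def minmod3 (a b c : ℝ) : ℝ :=
  if 0 < a ∧ 0 < b ∧ 0 < c then min a (min b c)
  else if a < 0 ∧ b < 0 ∧ c < 0 then max a (max b c)
  else 0

/-- MUSCL slopes `σ_j = 2θ·minmod(ρ_j − ρ_{j−1}, (ρ_{j+1} − ρ_{j−1})/2, ρ_{j+1} − ρ_j)`. -/
def slp (θ : ℝ) (ρ : ℤ → ℝ) (j : ℤ) : ℝ :=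
  2 * θ * minmod3 (ρ j - ρ (j - 1)) ((ρ (j + 1) - ρ (j - 1)) / 2) (ρ (j + 1) - ρ j)

/-- left interface value `ρ⁻_{j+1/2} = ρ_j + σ_j/2`. -/
def intL (θ : ℝ) (ρ : ℤ → ℝ) (j : ℤ) : ℝ := ρ j + slp θ ρ j / 2

/-- right interface value `ρ⁺_{j−1/2} = ρ_j − σ_j/2`. -/
def intR (θ : ℝ) (ρ : ℤ → ℝ) (j : ℤ) : ℝ := ρ j - slp θ ρ j / 2

/-- discrete convolution `A_j = Δx·Σ_l μ((j−l)Δx)·ρ_l`. -/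
def Adisc (μ : ℝ → ℝ) (Δx : ℝ) (ρ : ℤ → ℝ) (j : ℤ) : ℝ :=
  Δx * ∑' l : ℤ, μ (((j : ℝ) - (l : ℝ)) * Δx) * ρ l

/-- `s_j = θ·(A_{j+1} − A_{j−1})`. -/
def sdisc (μ : ℝ → ℝ) (θ Δx : ℝ) (ρ : ℤ → ℝ) (j : ℤ) : ℝ :=
  θ * (Adisc μ Δx ρ (j + 1) - Adisc μ Δx ρ (j - 1))

/-- `A⁻_{j+1/2} = A_j + s_j/2`. -/
def AdiscL (μ : ℝ → ℝ) (θ Δx : ℝ) (ρ : ℤ → ℝ) (j : ℤ) : ℝ :=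
  Adisc μ Δx ρ j + sdisc μ θ Δx ρ j / 2

/-- `A⁺_{j−1/2} = A_j − s_j/2`. -/
def AdiscR (μ : ℝ → ℝ) (θ Δx : ℝ) (ρ : ℤ → ℝ) (j : ℤ) : ℝ :=
  Adisc μ Δx ρ j - sdisc μ θ Δx ρ j / 2

/-- mid-time value `ρ^{½,−}_{j+1/2}`. -/
def midL (f : ℝ → ℝ → ℝ) (μ : ℝ → ℝ) (θ lam Δx : ℝ) (ρ : ℤ → ℝ) (j : ℤ) : ℝ :=
  intL θ ρ j - lam / 2 *
    (f (intL θ ρ j) (AdiscL μ θ Δx ρ j) - f (intR θ ρ j) (AdiscR μ θ Δx ρ j))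

/-- mid-time value `ρ^{½,+}_{j−1/2}`. -/
def midR (f : ℝ → ℝ → ℝ) (μ : ℝ → ℝ) (θ lam Δx : ℝ) (ρ : ℤ → ℝ) (j : ℤ) : ℝ :=
  intR θ ρ j - lam / 2 *
    (f (intL θ ρ j) (AdiscL μ θ Δx ρ j) - f (intR θ ρ j) (AdiscR μ θ Δx ρ j))

/-- mid-time convolution `A^{½}_{j+1/2}`. -/
def Amid (f : ℝ → ℝ → ℝ) (μ : ℝ → ℝ) (θ lam Δx : ℝ) (ρ : ℤ → ℝ) (j : ℤ) : ℝ :=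
  Δx / 2 * ∑' l : ℤ,
    (μ (((j : ℝ) + 1 - (l : ℝ)) * Δx) * midR f μ θ lam Δx ρ l +
     μ (((j : ℝ) - (l : ℝ)) * Δx) * midL f μ θ lam Δx ρ l)

/-- Lax–Friedrichs type numerical flux `F(u,v,A)`. -/
def numFlux (f : ℝ → ℝ → ℝ) (α lam u v A : ℝ) : ℝ :=
  (f u A + f v A) / 2 - α * (v - u) / (2 * lam)

/-- MUSCL–Hancock update `ρ'_j`. -/
def mhUpdate (f : ℝ → ℝ → ℝ) (μ : ℝ → ℝ) (θ α lam Δx : ℝ) (ρ : ℤ → ℝ) (j : ℤ) : ℝ :=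
  ρ j - lam *
    (numFlux f α lam (midL f μ θ lam Δx ρ j) (midR f μ θ lam Δx ρ (j + 1))
        (Amid f μ θ lam Δx ρ j) -
     numFlux f α lam (midL f μ θ lam Δx ρ (j - 1)) (midR f μ θ lam Δx ρ j)
        (Amid f μ θ lam Δx ρ (j - 1)))

/-- the corrector flux-difference term `D_{j+1/2}`. -/
def Dterm (f : ℝ → ℝ → ℝ) (μ : ℝ → ℝ) (θ α lam Δx : ℝ) (ρ : ℤ → ℝ) (j : ℤ) : ℝ :=
  (numFlux f α lam (midL f μ θ lam Δx ρ j) (midR f μ θ lam Δx ρ (j + 1))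
      (Amid f μ θ lam Δx ρ (j + 1)) -
    numFlux f α lam (midL f μ θ lam Δx ρ j) (midR f μ θ lam Δx ρ (j + 1))
      (Amid f μ θ lam Δx ρ j)) -
  (numFlux f α lam (midL f μ θ lam Δx ρ (j - 1)) (midR f μ θ lam Δx ρ j)
      (Amid f μ θ lam Δx ρ j) -
    numFlux f α lam (midL f μ θ lam Δx ρ (j - 1)) (midR f μ θ lam Δx ρ j)
      (Amid f μ θ lam Δx ρ (j - 1)))

open Function

theorem abs_sub_le_of_abs_deriv_le {g : ℝ → ℝ} (hg : Differentiable ℝ g) {C : ℝ}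
    (hC : ∀ x, |deriv g x| ≤ C) (a b : ℝ) : |g b - g a| ≤ C * |b - a| := by
  simpa only [Real.norm_eq_abs] using Convex.norm_image_sub_le_of_norm_deriv_le
    (fun x _ => hg x) (fun x _ => hC x) convex_univ (Set.mem_univ a) (Set.mem_univ b)

theorem abs_sub_sub_deriv_mul_le {g : ℝ → ℝ} (hg : Differentiable ℝ g)
    (hg' : Differentiable ℝ (deriv g)) {C : ℝ} (hC : ∀ x, |deriv (deriv g) x| ≤ C) (a b : ℝ) :
    |g b - g a - deriv g a * (b - a)| ≤ C * (b - a) ^ 2 := by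
  have hC₀ : 0 ≤ C := (abs_nonneg _).trans (hC 0)
  let h : ℝ → ℝ := fun x => g x - deriv g a * x
  have hh : Differentiable ℝ h := hg.sub (differentiable_id.const_mul _)
  have hh' : ∀ x ∈ Set.uIcc a b, ‖deriv h x‖ ≤ C * |b - a| := fun x hx => by
    have hdx : deriv h x = deriv g x - deriv g a := by
      have := ((hg x).hasDerivAt.sub ((hasDerivAt_id x).const_mul (deriv g a))).deriv
      rwa [mul_one] at this
    rw [hdx, Real.norm_eq_abs]
    exact (abs_sub_le_of_abs_deriv_le hg' hC a x).trans
      (mul_le_mul_of_nonneg_left (Set.abs_sub_left_of_mem_uIcc hx) hC₀)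
  have := Convex.norm_image_sub_le_of_norm_deriv_le (fun x _ => hh x) hh' (convex_uIcc a b)
    Set.left_mem_uIcc Set.right_mem_uIcc
  simp only [Real.norm_eq_abs] at this
  rw [mul_assoc, ← abs_mul, ← sq, abs_sq] at this
  convert this using 2
  ring

theorem abs_second_diff_le {g : ℝ → ℝ} (hg : ContDiff ℝ 2 g) {C₁ C₂ : ℝ}
    (h₁ : ∀ x, |deriv g x| ≤ C₁) (h₂ : ∀ x, |iteratedDeriv 2 g x| ≤ C₂) (a p q : ℝ) :
    |g p - 2 * g a + g q| ≤ C₂ * ((p - a) ^ 2 + (q - a) ^ 2) + C₁ * |p - 2 * a + q| := by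
  have hg₁ : Differentiable ℝ g := hg.differentiable two_ne_zero
  have hg₂ : Differentiable ℝ (deriv g) := by
    simpa only [iteratedDeriv_one] using hg.differentiable_iteratedDeriv 1 (by norm_num)
  have h₂' : ∀ x, |deriv (deriv g) x| ≤ C₂ := by
    simpa only [iteratedDeriv_succ, iteratedDeriv_zero] using h₂
  have hp := abs_sub_sub_deriv_mul_le hg₁ hg₂ h₂' a p
  have hq := abs_sub_sub_deriv_mul_le hg₁ hg₂ h₂' a q
  have hd : |deriv g a * (p - 2 * a + q)| ≤ C₁ * |p - 2 * a + q| := by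
    rw [abs_mul]; exact mul_le_mul_of_nonneg_right (h₁ a) (abs_nonneg _)
  calc |g p - 2 * g a + g q|
      = |(g p - g a - deriv g a * (p - a)) + (g q - g a - deriv g a * (q - a))
          + deriv g a * (p - 2 * a + q)| := by ring_nf
    _ ≤ _ := abs_add_three _ _ _
    _ ≤ _ := by linarith

theorem abs_second_diff_shift_le {g : ℝ → ℝ} (hg : ContDiff ℝ 2 g) {C₁ C₂ : ℝ}
    (h₁ : ∀ x, |deriv g x| ≤ C₁) (h₂ : ∀ x, |iteratedDeriv 2 g x| ≤ C₂) (y d : ℝ) :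
    |g (y + 2 * d) - 2 * g (y + d) + g y| ≤ 2 * C₂ * d ^ 2 := by
  have := abs_second_diff_le hg h₁ h₂ (y + d) (y + 2 * d) y
  rwa [show y + 2 * d - 2 * (y + d) + y = 0 by ring, abs_zero, mul_zero, add_zero,
    show C₂ * ((y + 2 * d - (y + d)) ^ 2 + (y - (y + d)) ^ 2) = 2 * C₂ * d ^ 2 by ring] at this

theorem abs_tsum_mul_le {ι : Type*} {c x : ι → ℝ} {K : ℝ} (hc : ∀ l, |c l| ≤ K)
    (hx : Summable fun l => |x l|) : |∑' l, c l * x l| ≤ K * ∑' l, |x l| := by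
  rw [← tsum_mul_left]
  exact tsum_of_norm_bounded (hx.mul_left K).hasSum fun l => by
    rw [Real.norm_eq_abs, abs_mul]; exact mul_le_mul_of_nonneg_right (hc l) (abs_nonneg _)

theorem tsum_abs_le_of_hasSum {ι : Type*} {g h : ι → ℝ} {a : ℝ} (hh : HasSum h a)
    (hgh : ∀ i, |g i| ≤ h i) : ∑' i, |g i| ≤ a :=
  hasSum_le hgh (Summable.of_nonneg_of_le (fun _ => abs_nonneg _) hgh hh.summable).hasSum hh

theorem hasSum_two_mul_abs_add_abs_succ {ρ : ℤ → ℝ} (hρ : Summable fun l => |ρ l|) :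
    HasSum (fun j => 2 * |ρ j| + |ρ (j + 1)|) (3 * ∑' l, |ρ l|) := by
  have hsucc : HasSum (fun j => |ρ (j + 1)|) (∑' l, |ρ l|) :=
    (Equiv.addRight (1 : ℤ)).hasSum_iff.mpr hρ.hasSum
  rw [show 3 * ∑' l, |ρ l| = 2 * ∑' l, |ρ l| + ∑' l, |ρ l| by ring]
  exact (hρ.hasSum.mul_left 2).add hsucc

section Flux

variable {f : ℝ → ℝ → ℝ} {L M B : ℝ}

theorem contDiff_flux_fst (hf : ContDiff ℝ 2 (uncurry f)) (A : ℝ) :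
    ContDiff ℝ 2 (fun r => f r A) :=
  hf.comp (contDiff_id.prodMk contDiff_const)

theorem contDiff_flux_snd (hf : ContDiff ℝ 2 (uncurry f)) (r : ℝ) : ContDiff ℝ 2 (f r) :=
  hf.comp (contDiff_const.prodMk contDiff_id)

theorem differentiable_deriv_flux_snd (hf : ContDiff ℝ 2 (uncurry f)) (a : ℝ) :
    Differentiable ℝ (fun r => deriv (f r) a) := by
  have hpartial : ∀ r, deriv (f r) a = fderiv ℝ (uncurry f) (r, a) (0, 1) := fun r =>
    (((hf.differentiable two_ne_zero) (r, a)).hasFDerivAt.comp_hasDerivAt a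
      ((hasDerivAt_const a r).prodMk (hasDerivAt_id a))).deriv
  simp only [hpartial]
  exact (((hf.fderiv_right (m := 1) (by norm_num)).comp
    (contDiff_id.prodMk contDiff_const)).clm_apply contDiff_const).differentiable one_ne_zero

theorem abs_flux_le (hf : ContDiff ℝ 2 (uncurry f)) (hf0 : ∀ A, f 0 A = 0)
    (hL : ∀ r A, |deriv (fun x => f x A) r| ≤ L) (r A : ℝ) : |f r A| ≤ L * |r| := by
  simpa [hf0] using abs_sub_le_of_abs_deriv_le
    ((contDiff_flux_fst hf A).differentiable two_ne_zero) (fun x => hL x A) 0 r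

theorem abs_flux_sub_le (hf : ContDiff ℝ 2 (uncurry f))
    (hL : ∀ r A, |deriv (fun x => f x A) r| ≤ L) (hdA : ∀ r a, |deriv (f r) a| ≤ M * |r|)
    (r s a b : ℝ) : |f s b - f r a| ≤ L * |s - r| + M * |r| * |b - a| := by
  have hfst := abs_sub_le_of_abs_deriv_le
    ((contDiff_flux_fst hf b).differentiable two_ne_zero) (fun x => hL x b) r s
  have hsnd := abs_sub_le_of_abs_deriv_le
    ((contDiff_flux_snd hf r).differentiable two_ne_zero) (fun x => hdA r x) a b
  calc |f s b - f r a| = |(f s b - f r b) + (f r b - f r a)| := by ring_nf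
    _ ≤ _ := (abs_add_le _ _).trans (add_le_add hfst hsnd)

theorem abs_flux_second_diff_snd_le (hf : ContDiff ℝ 2 (uncurry f))
    (hdA : ∀ r a, |deriv (f r) a| ≤ M * |r|) (hdAA : ∀ r a, |iteratedDeriv 2 (f r) a| ≤ M * |r|)
    (w a p q : ℝ) :
    |f w p - 2 * f w a + f w q| ≤ M * |w| * ((p - a) ^ 2 + (q - a) ^ 2 + |p - 2 * a + q|) := by
  have := abs_second_diff_le (contDiff_flux_snd hf w) (hdA w) (hdAA w) a p q
  linarith

theorem abs_flux_mixed_diff_le (hf : ContDiff ℝ 2 (uncurry f))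
    (hBρA : ∀ r a, |deriv (fun x => deriv (f x) a) r| ≤ B) (w w' a b : ℝ) :
    |(f w b - f w a) - (f w' b - f w' a)| ≤ B * |w - w'| * |b - a| := by
  have hdiff : Differentiable ℝ (fun c => f w c - f w' c) :=
    ((contDiff_flux_snd hf w).differentiable two_ne_zero).sub
      ((contDiff_flux_snd hf w').differentiable two_ne_zero)
  have hderiv : ∀ c, |deriv (fun c => f w c - f w' c) c| ≤ B * |w - w'| := fun c => by
    rw [deriv_fun_sub (((contDiff_flux_snd hf w).differentiable two_ne_zero) c)
      (((contDiff_flux_snd hf w').differentiable two_ne_zero) c)]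
    exact abs_sub_le_of_abs_deriv_le (differentiable_deriv_flux_snd hf c) (fun x => hBρA x c) w' w
  have := abs_sub_le_of_abs_deriv_le hdiff hderiv a b
  convert this using 2
  ring

end Flux

theorem abs_minmod3_le_left (a b c : ℝ) : |minmod3 a b c| ≤ |a| := by
  unfold minmod3
  split_ifs <;> grind [abs_of_pos, abs_of_neg, abs_nonneg]

theorem abs_minmod3_le_right (a b c : ℝ) : |minmod3 a b c| ≤ |c| := by
  unfold minmod3
  split_ifs <;> grind [abs_of_pos, abs_of_neg, abs_nonneg]

section Reconstruction

variable {θ : ℝ} (ρ : ℤ → ℝ) (j : ℤ)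

theorem abs_slp_le_right (hθ₀ : 0 ≤ θ) (hθ₁ : θ ≤ 1 / 2) :
    |slp θ ρ j| ≤ |ρ (j + 1) - ρ j| := by
  rw [slp, abs_mul, abs_of_nonneg (by linarith : 0 ≤ 2 * θ)]
  exact (mul_le_mul (by linarith) (abs_minmod3_le_right _ _ _) (abs_nonneg _) zero_le_one).trans
    (one_mul _).le

theorem abs_slp_le_left (hθ₀ : 0 ≤ θ) (hθ₁ : θ ≤ 1 / 2) :
    |slp θ ρ j| ≤ |ρ j - ρ (j - 1)| := by
  rw [slp, abs_mul, abs_of_nonneg (by linarith : 0 ≤ 2 * θ)]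
  exact (mul_le_mul (by linarith) (abs_minmod3_le_left _ _ _) (abs_nonneg _) zero_le_one).trans
    (one_mul _).le

theorem abs_intL_le (hθ₀ : 0 ≤ θ) (hθ₁ : θ ≤ 1 / 2) :
    |intL θ ρ j| ≤ 2 * |ρ j| + |ρ (j + 1)| := by
  have := abs_slp_le_right ρ j hθ₀ hθ₁
  have := abs_sub (ρ (j + 1)) (ρ j)
  have := abs_add_le (ρ j) (slp θ ρ j / 2)
  rw [abs_div, abs_two] at this
  rw [intL]; linarith [abs_nonneg (ρ j), abs_nonneg (ρ (j + 1))]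

theorem abs_intR_le (hθ₀ : 0 ≤ θ) (hθ₁ : θ ≤ 1 / 2) :
    |intR θ ρ j| ≤ 2 * |ρ j| + |ρ (j + 1)| := by
  have := abs_slp_le_right ρ j hθ₀ hθ₁
  have := abs_sub (ρ (j + 1)) (ρ j)
  have := abs_sub (ρ j) (slp θ ρ j / 2)
  rw [abs_div, abs_two] at this
  rw [intR]; linarith [abs_nonneg (ρ j), abs_nonneg (ρ (j + 1))]

theorem abs_intL_add_one_sub_le (hθ₀ : 0 ≤ θ) (hθ₁ : θ ≤ 1 / 2) :
    |intL θ ρ (j + 1) - intL θ ρ j| ≤ 2 * |ρ (j + 1) - ρ j| := by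
  have h₁ := abs_slp_le_left ρ (j + 1) hθ₀ hθ₁
  rw [add_sub_cancel_right] at h₁
  have h₀ := abs_slp_le_right ρ j hθ₀ hθ₁
  calc |intL θ ρ (j + 1) - intL θ ρ j|
      = |(ρ (j + 1) - ρ j) + slp θ ρ (j + 1) / 2 + -slp θ ρ j / 2| := by rw [intL, intL]; ring_nf
    _ ≤ |ρ (j + 1) - ρ j| + |slp θ ρ (j + 1) / 2| + |-slp θ ρ j / 2| := abs_add_three _ _ _
    _ ≤ _ := by simp only [abs_div, abs_neg, abs_two]; linarith

theorem abs_intR_add_one_sub_le (hθ₀ : 0 ≤ θ) (hθ₁ : θ ≤ 1 / 2) :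
    |intR θ ρ (j + 1) - intR θ ρ j| ≤ 2 * |ρ (j + 1) - ρ j| := by
  have h₁ := abs_slp_le_left ρ (j + 1) hθ₀ hθ₁
  rw [add_sub_cancel_right] at h₁
  have h₀ := abs_slp_le_right ρ j hθ₀ hθ₁
  calc |intR θ ρ (j + 1) - intR θ ρ j|
      = |(ρ (j + 1) - ρ j) + -slp θ ρ (j + 1) / 2 + slp θ ρ j / 2| := by rw [intR, intR]; ring_nf
    _ ≤ |ρ (j + 1) - ρ j| + |-slp θ ρ (j + 1) / 2| + |slp θ ρ j / 2| := abs_add_three _ _ _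
    _ ≤ _ := by simp only [abs_div, abs_neg, abs_two]; linarith

end Reconstruction

/-- `A_j = Δx · discreteConv μ Δx ρ j`; the real argument `t` also covers the shifted kernels
`μ((j + 1 − l)Δx)` of the mid-time convolution. -/
def discreteConv (μ : ℝ → ℝ) (Δx : ℝ) (x : ℤ → ℝ) (t : ℝ) : ℝ :=
  ∑' l : ℤ, μ ((t - l) * Δx) * x l

section DiscreteConv

variable {μ : ℝ → ℝ} {Δx C₀ C₁ C₂ : ℝ} {x : ℤ → ℝ}

theorem summable_discreteConv_term (hμ : ∀ y, |μ y| ≤ C₀) (hx : Summable fun l => |x l|)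
    (t : ℝ) : Summable fun l : ℤ => μ ((t - l) * Δx) * x l :=
  Summable.of_norm_bounded (hx.mul_left C₀) fun l => by
    rw [Real.norm_eq_abs, abs_mul]; exact mul_le_mul_of_nonneg_right (hμ _) (abs_nonneg _)

theorem abs_discreteConv_add_one_sub_le (hμ : ∀ y, |μ y| ≤ C₀)
    (hμ₁ : ∀ y d, |μ (y + d) - μ y| ≤ C₁ * |d|) (hx : Summable fun l => |x l|) (hΔx : 0 ≤ Δx)
    (t : ℝ) :
    |discreteConv μ Δx x (t + 1) - discreteConv μ Δx x t| ≤ C₁ * Δx * ∑' l, |x l| := by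
  have hsub := ((summable_discreteConv_term (Δx := Δx) hμ hx (t + 1)).hasSum.sub
    (summable_discreteConv_term (Δx := Δx) hμ hx t).hasSum).tsum_eq
  rw [discreteConv, discreteConv, ← hsub]
  simp_rw [← sub_mul]
  refine abs_tsum_mul_le (fun l => ?_) hx
  have := hμ₁ ((t - l) * Δx) Δx
  rwa [abs_of_nonneg hΔx, show (t - l) * Δx + Δx = (t + 1 - l) * Δx by ring] at this

theorem abs_discreteConv_second_diff_le (hμ : ∀ y, |μ y| ≤ C₀)
    (hμ₂ : ∀ y d, |μ (y + 2 * d) - 2 * μ (y + d) + μ y| ≤ C₂ * d ^ 2)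
    (hx : Summable fun l => |x l|) (t : ℝ) :
    |discreteConv μ Δx x (t + 1) - 2 * discreteConv μ Δx x t + discreteConv μ Δx x (t - 1)| ≤
      C₂ * Δx ^ 2 * ∑' l, |x l| := by
  have hsum := (((summable_discreteConv_term (Δx := Δx) hμ hx (t + 1)).hasSum.sub
    ((summable_discreteConv_term (Δx := Δx) hμ hx t).hasSum.mul_left 2)).add
    (summable_discreteConv_term (Δx := Δx) hμ hx (t - 1)).hasSum).tsum_eq
  rw [discreteConv, discreteConv, discreteConv, ← hsum]
  simp_rw [← mul_assoc, ← sub_mul, ← add_mul]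
  refine abs_tsum_mul_le (fun l => ?_) hx
  have := hμ₂ ((t - 1 - l) * Δx) Δx
  rw [show (t - 1 - l) * Δx + 2 * Δx = (t + 1 - l) * Δx by ring,
    show (t - 1 - l) * Δx + Δx = (t - l) * Δx by ring] at this
  exact this

end DiscreteConv

section ReconstructedConvolution

variable {μ : ℝ → ℝ} {θ Δx X : ℝ} {ρ : ℤ → ℝ}

theorem abs_Adisc_add_one_sub_le {C₀ C₁ : ℝ} (hμ : ∀ y, |μ y| ≤ C₀)
    (hμ₁ : ∀ y d, |μ (y + d) - μ y| ≤ C₁ * |d|) (hρ : Summable fun l => |ρ l|) (hΔx : 0 ≤ Δx)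
    (j : ℤ) : |Adisc μ Δx ρ (j + 1) - Adisc μ Δx ρ j| ≤ C₁ * Δx ^ 2 * ∑' l, |ρ l| := by
  have h := abs_discreteConv_add_one_sub_le (Δx := Δx) hμ hμ₁ hρ hΔx j
  calc |Adisc μ Δx ρ (j + 1) - Adisc μ Δx ρ j|
      = Δx * |discreteConv μ Δx ρ (j + 1) - discreteConv μ Δx ρ j| := by
        rw [Adisc, Adisc, ← mul_sub, abs_mul, abs_of_nonneg hΔx]; push_cast; rfl
    _ ≤ Δx * (C₁ * Δx * ∑' l, |ρ l|) := by gcongr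
    _ = _ := by ring

theorem abs_sdisc_le (hθ₀ : 0 ≤ θ) (hθ₁ : θ ≤ 1 / 2)
    (hA : ∀ k, |Adisc μ Δx ρ (k + 1) - Adisc μ Δx ρ k| ≤ X) (j : ℤ) :
    |sdisc μ θ Δx ρ j| ≤ X := by
  have h₁ := hA j
  have h₀ := hA (j - 1)
  rw [sub_add_cancel] at h₀
  have := abs_add_le (Adisc μ Δx ρ (j + 1) - Adisc μ Δx ρ j) (Adisc μ Δx ρ j - Adisc μ Δx ρ (j - 1))
  rw [sub_add_sub_cancel] at this
  rw [sdisc, abs_mul, abs_of_nonneg hθ₀]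
  nlinarith [abs_nonneg (Adisc μ Δx ρ (j + 1) - Adisc μ Δx ρ (j - 1))]

theorem abs_AdiscL_add_one_sub_le (hθ₀ : 0 ≤ θ) (hθ₁ : θ ≤ 1 / 2)
    (hA : ∀ k, |Adisc μ Δx ρ (k + 1) - Adisc μ Δx ρ k| ≤ X) (j : ℤ) :
    |AdiscL μ θ Δx ρ (j + 1) - AdiscL μ θ Δx ρ j| ≤ 2 * X := by
  have h₁ := abs_sdisc_le hθ₀ hθ₁ hA (j + 1)
  have h₀ := abs_sdisc_le hθ₀ hθ₁ hA j
  calc |AdiscL μ θ Δx ρ (j + 1) - AdiscL μ θ Δx ρ j|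
      = |(Adisc μ Δx ρ (j + 1) - Adisc μ Δx ρ j) + sdisc μ θ Δx ρ (j + 1) / 2
          + -sdisc μ θ Δx ρ j / 2| := by rw [AdiscL, AdiscL]; ring_nf
    _ ≤ _ := abs_add_three _ _ _
    _ ≤ _ := by simp only [abs_div, abs_neg, abs_two]; linarith [hA j]

theorem abs_AdiscR_add_one_sub_le (hθ₀ : 0 ≤ θ) (hθ₁ : θ ≤ 1 / 2)
    (hA : ∀ k, |Adisc μ Δx ρ (k + 1) - Adisc μ Δx ρ k| ≤ X) (j : ℤ) :
    |AdiscR μ θ Δx ρ (j + 1) - AdiscR μ θ Δx ρ j| ≤ 2 * X := by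
  have h₁ := abs_sdisc_le hθ₀ hθ₁ hA (j + 1)
  have h₀ := abs_sdisc_le hθ₀ hθ₁ hA j
  calc |AdiscR μ θ Δx ρ (j + 1) - AdiscR μ θ Δx ρ j|
      = |(Adisc μ Δx ρ (j + 1) - Adisc μ Δx ρ j) + -sdisc μ θ Δx ρ (j + 1) / 2
          + sdisc μ θ Δx ρ j / 2| := by rw [AdiscR, AdiscR]; ring_nf
    _ ≤ _ := abs_add_three _ _ _
    _ ≤ _ := by simp only [abs_div, abs_neg, abs_two]; linarith [hA j]

end ReconstructedConvolution

def cellFluxDiff (f : ℝ → ℝ → ℝ) (μ : ℝ → ℝ) (θ Δx : ℝ) (ρ : ℤ → ℝ) (j : ℤ) : ℝ :=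
  f (intL θ ρ j) (AdiscL μ θ Δx ρ j) - f (intR θ ρ j) (AdiscR μ θ Δx ρ j)

theorem abs_sub_half_mul_le {lam : ℝ} (hlam : 0 ≤ lam) (a b : ℝ) :
    |a - lam / 2 * b| ≤ |a| + lam / 2 * |b| :=
  (abs_sub _ _).trans_eq (by rw [abs_mul, abs_of_nonneg (div_nonneg hlam zero_le_two)])

section HalfStep

variable {f : ℝ → ℝ → ℝ} {μ : ℝ → ℝ} {θ lam Δx L M Y : ℝ} {ρ : ℤ → ℝ}

theorem midL_eq (j : ℤ) :
    midL f μ θ lam Δx ρ j = intL θ ρ j - lam / 2 * cellFluxDiff f μ θ Δx ρ j := rfl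

theorem midR_eq (j : ℤ) :
    midR f μ θ lam Δx ρ j = intR θ ρ j - lam / 2 * cellFluxDiff f μ θ Δx ρ j := rfl

theorem abs_cellFluxDiff_le (hf : ∀ r A, |f r A| ≤ L * |r|) (hL : 0 ≤ L)
    (hθ₀ : 0 ≤ θ) (hθ₁ : θ ≤ 1 / 2) (j : ℤ) :
    |cellFluxDiff f μ θ Δx ρ j| ≤ 2 * L * (2 * |ρ j| + |ρ (j + 1)|) := by
  have hl := abs_intL_le ρ j hθ₀ hθ₁
  have hr := abs_intR_le ρ j hθ₀ hθ₁
  calc |cellFluxDiff f μ θ Δx ρ j|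
      ≤ L * |intL θ ρ j| + L * |intR θ ρ j| :=
        (abs_sub _ _).trans (add_le_add (hf _ _) (hf _ _))
    _ ≤ L * (2 * |ρ j| + |ρ (j + 1)|) + L * (2 * |ρ j| + |ρ (j + 1)|) := by gcongr
    _ = _ := by ring

theorem abs_midL_le (hf : ∀ r A, |f r A| ≤ L * |r|) (hL : 0 ≤ L) (hlam : 0 ≤ lam)
    (hθ₀ : 0 ≤ θ) (hθ₁ : θ ≤ 1 / 2) (j : ℤ) :
    |midL f μ θ lam Δx ρ j| ≤ (1 + lam * L) * (2 * |ρ j| + |ρ (j + 1)|) := by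
  have hi := abs_intL_le ρ j hθ₀ hθ₁
  have hΦ := abs_cellFluxDiff_le (μ := μ) (Δx := Δx) (ρ := ρ) hf hL hθ₀ hθ₁ j
  calc |midL f μ θ lam Δx ρ j|
      ≤ |intL θ ρ j| + lam / 2 * |cellFluxDiff f μ θ Δx ρ j| := abs_sub_half_mul_le hlam _ _
    _ ≤ (2 * |ρ j| + |ρ (j + 1)|) + lam / 2 * (2 * L * (2 * |ρ j| + |ρ (j + 1)|)) := by gcongr
    _ = _ := by ring

theorem abs_midR_le (hf : ∀ r A, |f r A| ≤ L * |r|) (hL : 0 ≤ L) (hlam : 0 ≤ lam)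
    (hθ₀ : 0 ≤ θ) (hθ₁ : θ ≤ 1 / 2) (j : ℤ) :
    |midR f μ θ lam Δx ρ j| ≤ (1 + lam * L) * (2 * |ρ j| + |ρ (j + 1)|) := by
  have hi := abs_intR_le ρ j hθ₀ hθ₁
  have hΦ := abs_cellFluxDiff_le (μ := μ) (Δx := Δx) (ρ := ρ) hf hL hθ₀ hθ₁ j
  calc |midR f μ θ lam Δx ρ j|
      ≤ |intR θ ρ j| + lam / 2 * |cellFluxDiff f μ θ Δx ρ j| := abs_sub_half_mul_le hlam _ _
    _ ≤ (2 * |ρ j| + |ρ (j + 1)|) + lam / 2 * (2 * L * (2 * |ρ j| + |ρ (j + 1)|)) := by gcongr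
    _ = _ := by ring

theorem abs_cellFluxDiff_add_one_sub_le
    (hf : ∀ r s a b, |f s b - f r a| ≤ L * |s - r| + M * |r| * |b - a|) (hL : 0 ≤ L)
    (hM : 0 ≤ M) (hθ₀ : 0 ≤ θ) (hθ₁ : θ ≤ 1 / 2) (j : ℤ)
    (hAL : |AdiscL μ θ Δx ρ (j + 1) - AdiscL μ θ Δx ρ j| ≤ Y)
    (hAR : |AdiscR μ θ Δx ρ (j + 1) - AdiscR μ θ Δx ρ j| ≤ Y) :
    |cellFluxDiff f μ θ Δx ρ (j + 1) - cellFluxDiff f μ θ Δx ρ j| ≤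
      4 * L * |ρ (j + 1) - ρ j| + 2 * M * Y * (2 * |ρ j| + |ρ (j + 1)|) := by
  have hl := hf (intL θ ρ j) (intL θ ρ (j + 1)) (AdiscL μ θ Δx ρ j) (AdiscL μ θ Δx ρ (j + 1))
  have hr := hf (intR θ ρ j) (intR θ ρ (j + 1)) (AdiscR μ θ Δx ρ j) (AdiscR μ θ Δx ρ (j + 1))
  have hdl := abs_intL_add_one_sub_le ρ j hθ₀ hθ₁
  have hdr := abs_intR_add_one_sub_le ρ j hθ₀ hθ₁
  have hil := abs_intL_le ρ j hθ₀ hθ₁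
  have hir := abs_intR_le ρ j hθ₀ hθ₁
  calc |cellFluxDiff f μ θ Δx ρ (j + 1) - cellFluxDiff f μ θ Δx ρ j|
      ≤ |f (intL θ ρ (j + 1)) (AdiscL μ θ Δx ρ (j + 1)) - f (intL θ ρ j) (AdiscL μ θ Δx ρ j)|
        + |f (intR θ ρ (j + 1)) (AdiscR μ θ Δx ρ (j + 1)) - f (intR θ ρ j) (AdiscR μ θ Δx ρ j)| :=
        (abs_sub _ _).trans_eq' (by rw [cellFluxDiff, cellFluxDiff, sub_sub_sub_comm])
    _ ≤ (L * (2 * |ρ (j + 1) - ρ j|) + M * (2 * |ρ j| + |ρ (j + 1)|) * Y)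
        + (L * (2 * |ρ (j + 1) - ρ j|) + M * (2 * |ρ j| + |ρ (j + 1)|) * Y) := by
        gcongr
        · exact hl.trans (by gcongr)
        · exact hr.trans (by gcongr)
    _ = _ := by ring

theorem abs_midL_add_one_sub_le
    (hf : ∀ r s a b, |f s b - f r a| ≤ L * |s - r| + M * |r| * |b - a|) (hL : 0 ≤ L)
    (hM : 0 ≤ M) (hlam : 0 ≤ lam) (hθ₀ : 0 ≤ θ) (hθ₁ : θ ≤ 1 / 2) (j : ℤ)
    (hAL : |AdiscL μ θ Δx ρ (j + 1) - AdiscL μ θ Δx ρ j| ≤ Y)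
    (hAR : |AdiscR μ θ Δx ρ (j + 1) - AdiscR μ θ Δx ρ j| ≤ Y) :
    |midL f μ θ lam Δx ρ (j + 1) - midL f μ θ lam Δx ρ j| ≤
      2 * (1 + lam * L) * |ρ (j + 1) - ρ j| + lam * M * Y * (2 * |ρ j| + |ρ (j + 1)|) := by
  have hi := abs_intL_add_one_sub_le ρ j hθ₀ hθ₁
  have hΦ := abs_cellFluxDiff_add_one_sub_le hf hL hM hθ₀ hθ₁ j hAL hAR
  calc |midL f μ θ lam Δx ρ (j + 1) - midL f μ θ lam Δx ρ j|
      = |(intL θ ρ (j + 1) - intL θ ρ j)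
          - lam / 2 * (cellFluxDiff f μ θ Δx ρ (j + 1) - cellFluxDiff f μ θ Δx ρ j)| := by
        rw [midL_eq, midL_eq]; ring_nf
    _ ≤ _ := abs_sub_half_mul_le hlam _ _
    _ ≤ 2 * |ρ (j + 1) - ρ j|
        + lam / 2 * (4 * L * |ρ (j + 1) - ρ j| + 2 * M * Y * (2 * |ρ j| + |ρ (j + 1)|)) := by
        gcongr
    _ = _ := by ring

theorem abs_midR_add_one_sub_le
    (hf : ∀ r s a b, |f s b - f r a| ≤ L * |s - r| + M * |r| * |b - a|) (hL : 0 ≤ L)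
    (hM : 0 ≤ M) (hlam : 0 ≤ lam) (hθ₀ : 0 ≤ θ) (hθ₁ : θ ≤ 1 / 2) (j : ℤ)
    (hAL : |AdiscL μ θ Δx ρ (j + 1) - AdiscL μ θ Δx ρ j| ≤ Y)
    (hAR : |AdiscR μ θ Δx ρ (j + 1) - AdiscR μ θ Δx ρ j| ≤ Y) :
    |midR f μ θ lam Δx ρ (j + 1) - midR f μ θ lam Δx ρ j| ≤
      2 * (1 + lam * L) * |ρ (j + 1) - ρ j| + lam * M * Y * (2 * |ρ j| + |ρ (j + 1)|) := by
  have hi := abs_intR_add_one_sub_le ρ j hθ₀ hθ₁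
  have hΦ := abs_cellFluxDiff_add_one_sub_le hf hL hM hθ₀ hθ₁ j hAL hAR
  calc |midR f μ θ lam Δx ρ (j + 1) - midR f μ θ lam Δx ρ j|
      = |(intR θ ρ (j + 1) - intR θ ρ j)
          - lam / 2 * (cellFluxDiff f μ θ Δx ρ (j + 1) - cellFluxDiff f μ θ Δx ρ j)| := by
        rw [midR_eq, midR_eq]; ring_nf
    _ ≤ _ := abs_sub_half_mul_le hlam _ _
    _ ≤ 2 * |ρ (j + 1) - ρ j|
        + lam / 2 * (4 * L * |ρ (j + 1) - ρ j| + 2 * M * Y * (2 * |ρ j| + |ρ (j + 1)|)) := by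
        gcongr
    _ = _ := by ring

theorem summable_abs_midL (hf : ∀ r A, |f r A| ≤ L * |r|) (hL : 0 ≤ L) (hlam : 0 ≤ lam)
    (hθ₀ : 0 ≤ θ) (hθ₁ : θ ≤ 1 / 2) (hρ : Summable fun l => |ρ l|) :
    Summable fun j => |midL f μ θ lam Δx ρ j| :=
  Summable.of_nonneg_of_le (fun _ => abs_nonneg _) (abs_midL_le hf hL hlam hθ₀ hθ₁)
    ((hasSum_two_mul_abs_add_abs_succ hρ).summable.mul_left _)

theorem summable_abs_midR (hf : ∀ r A, |f r A| ≤ L * |r|) (hL : 0 ≤ L) (hlam : 0 ≤ lam)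
    (hθ₀ : 0 ≤ θ) (hθ₁ : θ ≤ 1 / 2) (hρ : Summable fun l => |ρ l|) :
    Summable fun j => |midR f μ θ lam Δx ρ j| :=
  Summable.of_nonneg_of_le (fun _ => abs_nonneg _) (abs_midR_le hf hL hlam hθ₀ hθ₁)
    ((hasSum_two_mul_abs_add_abs_succ hρ).summable.mul_left _)

theorem tsum_abs_midL_le (hf : ∀ r A, |f r A| ≤ L * |r|) (hL : 0 ≤ L) (hlam : 0 ≤ lam)
    (hθ₀ : 0 ≤ θ) (hθ₁ : θ ≤ 1 / 2) (hρ : Summable fun l => |ρ l|) :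
    ∑' j, |midL f μ θ lam Δx ρ j| ≤ 3 * (1 + lam * L) * ∑' l, |ρ l| := by
  refine (tsum_abs_le_of_hasSum ((hasSum_two_mul_abs_add_abs_succ hρ).mul_left _)
    (abs_midL_le hf hL hlam hθ₀ hθ₁)).trans_eq ?_
  ring

theorem tsum_abs_midR_le (hf : ∀ r A, |f r A| ≤ L * |r|) (hL : 0 ≤ L) (hlam : 0 ≤ lam)
    (hθ₀ : 0 ≤ θ) (hθ₁ : θ ≤ 1 / 2) (hρ : Summable fun l => |ρ l|) :
    ∑' j, |midR f μ θ lam Δx ρ j| ≤ 3 * (1 + lam * L) * ∑' l, |ρ l| := by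
  refine (tsum_abs_le_of_hasSum ((hasSum_two_mul_abs_add_abs_succ hρ).mul_left _)
    (abs_midR_le hf hL hlam hθ₀ hθ₁)).trans_eq ?_
  ring

end HalfStep

section MidTimeConvolution

variable {f : ℝ → ℝ → ℝ} {μ : ℝ → ℝ} {θ lam Δx C₀ S : ℝ} {ρ : ℤ → ℝ}

theorem Amid_eq (hμ : ∀ y, |μ y| ≤ C₀) (hu : Summable fun l => |midL f μ θ lam Δx ρ l|)
    (hv : Summable fun l => |midR f μ θ lam Δx ρ l|) (j : ℤ) :
    Amid f μ θ lam Δx ρ j = Δx / 2 * (discreteConv μ Δx (midR f μ θ lam Δx ρ) (j + 1)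
      + discreteConv μ Δx (midL f μ θ lam Δx ρ) j) := by
  rw [Amid, discreteConv, discreteConv, ← (summable_discreteConv_term hμ hv _).tsum_add
    (summable_discreteConv_term hμ hu _)]

theorem abs_Amid_add_one_sub_le {C₁ : ℝ} (hμ : ∀ y, |μ y| ≤ C₀)
    (hμ₁ : ∀ y d, |μ (y + d) - μ y| ≤ C₁ * |d|) (hΔx : 0 ≤ Δx)
    (hu : Summable fun l => |midL f μ θ lam Δx ρ l|)
    (hv : Summable fun l => |midR f μ θ lam Δx ρ l|)
    (hU : ∑' l, |midL f μ θ lam Δx ρ l| ≤ S) (hV : ∑' l, |midR f μ θ lam Δx ρ l| ≤ S) (j : ℤ) :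
    |Amid f μ θ lam Δx ρ (j + 1) - Amid f μ θ lam Δx ρ j| ≤ C₁ * Δx ^ 2 * S := by
  have hC₁ : 0 ≤ C₁ := by simpa using (abs_nonneg _).trans (hμ₁ 0 1)
  set R := discreteConv μ Δx (midR f μ θ lam Δx ρ)
  set U := discreteConv μ Δx (midL f μ θ lam Δx ρ)
  have hR := abs_discreteConv_add_one_sub_le hμ hμ₁ hv hΔx ((j : ℝ) + 1)
  have hL := abs_discreteConv_add_one_sub_le hμ hμ₁ hu hΔx (j : ℝ)
  rw [Amid_eq hμ hu hv, Amid_eq hμ hu hv]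
  push_cast
  calc |Δx / 2 * (R (j + 1 + 1) + U (j + 1)) - Δx / 2 * (R (j + 1) + U j)|
      = Δx / 2 * |(R (j + 1 + 1) - R (j + 1)) + (U (j + 1) - U j)| := by
        rw [← mul_sub, abs_mul, abs_of_nonneg (by positivity)]; ring_nf
    _ ≤ Δx / 2 * (C₁ * Δx * S + C₁ * Δx * S) := by
        gcongr
        refine (abs_add_le _ _).trans (add_le_add (hR.trans ?_) (hL.trans ?_)) <;> gcongr
    _ = _ := by ring

theorem abs_Amid_second_diff_le {C₂ : ℝ} (hμ : ∀ y, |μ y| ≤ C₀)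
    (hμ₂ : ∀ y d, |μ (y + 2 * d) - 2 * μ (y + d) + μ y| ≤ C₂ * d ^ 2) (hΔx : 0 ≤ Δx)
    (hu : Summable fun l => |midL f μ θ lam Δx ρ l|)
    (hv : Summable fun l => |midR f μ θ lam Δx ρ l|)
    (hU : ∑' l, |midL f μ θ lam Δx ρ l| ≤ S) (hV : ∑' l, |midR f μ θ lam Δx ρ l| ≤ S) (j : ℤ) :
    |Amid f μ θ lam Δx ρ (j + 1) - 2 * Amid f μ θ lam Δx ρ j + Amid f μ θ lam Δx ρ (j - 1)| ≤
      C₂ * Δx ^ 3 * S := by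
  have hC₂ : 0 ≤ C₂ := by simpa using (abs_nonneg _).trans (hμ₂ 0 1)
  set R := discreteConv μ Δx (midR f μ θ lam Δx ρ)
  set U := discreteConv μ Δx (midL f μ θ lam Δx ρ)
  have hR := abs_discreteConv_second_diff_le (Δx := Δx) hμ hμ₂ hv ((j : ℝ) + 1)
  have hL := abs_discreteConv_second_diff_le (Δx := Δx) hμ hμ₂ hu (j : ℝ)
  rw [add_sub_cancel_right] at hR
  rw [Amid_eq hμ hu hv, Amid_eq hμ hu hv, Amid_eq hμ hu hv]
  push_cast
  rw [sub_add_cancel]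
  calc |Δx / 2 * (R (j + 1 + 1) + U (j + 1)) - 2 * (Δx / 2 * (R (j + 1) + U j))
        + Δx / 2 * (R j + U (j - 1))|
      = Δx / 2 * |(R (j + 1 + 1) - 2 * R (j + 1) + R j) + (U (j + 1) - 2 * U j + U (j - 1))| := by
        conv_rhs => rw [← abs_of_nonneg (by positivity : 0 ≤ Δx / 2), ← abs_mul]
        ring_nf
    _ ≤ Δx / 2 * (C₂ * Δx ^ 2 * S + C₂ * Δx ^ 2 * S) := by
        gcongr
        refine (abs_add_le _ _).trans (add_le_add (hR.trans ?_) (hL.trans ?_)) <;> gcongr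
    _ = _ := by ring

end MidTimeConvolution

theorem numFlux_corrector_eq (f : ℝ → ℝ → ℝ) (α lam u u' v v' aₘ a₀ aₚ : ℝ) :
    (numFlux f α lam u v aₚ - numFlux f α lam u v a₀)
      - (numFlux f α lam u' v' a₀ - numFlux f α lam u' v' aₘ) =
    ((f u aₚ - 2 * f u a₀ + f u aₘ) + (f v aₚ - 2 * f v a₀ + f v aₘ)
      + ((f u a₀ - f u aₘ) - (f u' a₀ - f u' aₘ))
      + ((f v a₀ - f v aₘ) - (f v' a₀ - f v' aₘ))) / 2 := by
  unfold numFlux; ring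

section Corrector

variable {f : ℝ → ℝ → ℝ} {μ : ℝ → ℝ} {θ α lam Δx L M B E G Y : ℝ} {ρ : ℤ → ℝ}

theorem abs_numFlux_corrector_le
    (hf₂ : ∀ w a p q, |f w p - 2 * f w a + f w q| ≤
      M * |w| * ((p - a) ^ 2 + (q - a) ^ 2 + |p - 2 * a + q|))
    (hf₁₁ : ∀ w w' a b, |(f w b - f w a) - (f w' b - f w' a)| ≤ B * |w - w'| * |b - a|)
    (α lam u u' v v' aₘ a₀ aₚ : ℝ) :
    |(numFlux f α lam u v aₚ - numFlux f α lam u v a₀)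
      - (numFlux f α lam u' v' a₀ - numFlux f α lam u' v' aₘ)| ≤
    (M * (|u| + |v|) * ((aₚ - a₀) ^ 2 + (aₘ - a₀) ^ 2 + |aₚ - 2 * a₀ + aₘ|)
      + B * (|u - u'| + |v - v'|) * |a₀ - aₘ|) / 2 := by
  rw [numFlux_corrector_eq, abs_div, abs_two]
  gcongr
  refine (abs_add_le _ _).trans ((add_le_add (abs_add_three _ _ _) le_rfl).trans ?_)
  linarith [hf₂ u a₀ aₚ aₘ, hf₂ v a₀ aₚ aₘ, hf₁₁ u u' aₘ a₀, hf₁₁ v v' aₘ a₀]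


theorem abs_Dterm_le
    (hf₂ : ∀ w a p q, |f w p - 2 * f w a + f w q| ≤
      M * |w| * ((p - a) ^ 2 + (q - a) ^ 2 + |p - 2 * a + q|))
    (hf₁₁ : ∀ w w' a b, |(f w b - f w a) - (f w' b - f w' a)| ≤ B * |w - w'| * |b - a|)
    (hM : 0 ≤ M) (hB : 0 ≤ B)
    (hE : ∀ k, |Amid f μ θ lam Δx ρ (k + 1) - Amid f μ θ lam Δx ρ k| ≤ E)
    (hG : ∀ k, |Amid f μ θ lam Δx ρ (k + 1) - 2 * Amid f μ θ lam Δx ρ k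
      + Amid f μ θ lam Δx ρ (k - 1)| ≤ G) (j : ℤ) :
    |Dterm f μ θ α lam Δx ρ j| ≤
      (M * (|midL f μ θ lam Δx ρ j| + |midR f μ θ lam Δx ρ (j + 1)|) * (2 * E ^ 2 + G)
        + B * (|midL f μ θ lam Δx ρ j - midL f μ θ lam Δx ρ (j - 1)|
          + |midR f μ θ lam Δx ρ (j + 1) - midR f μ θ lam Δx ρ j|) * E) / 2 := by
  have hp := hE j
  have hm := hE (j - 1)
  rw [sub_add_cancel] at hm
  have hp2 := pow_le_pow_left₀ (abs_nonneg _) hp 2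
  have hm2 := pow_le_pow_left₀ (abs_nonneg _) hm 2
  rw [sq_abs] at hp2
  rw [sq_abs, ← neg_sq, neg_sub] at hm2
  have hQ := hG j
  rw [Dterm]
  refine (abs_numFlux_corrector_le hf₂ hf₁₁ _ _ _ _ _ _ _ _ _).trans ?_
  gcongr
  linarith

theorem tsum_abs_Dterm_le_of_abs_Amid_le
    (hf₀ : ∀ r A, |f r A| ≤ L * |r|)
    (hf₁ : ∀ r s a b, |f s b - f r a| ≤ L * |s - r| + M * |r| * |b - a|)
    (hf₂ : ∀ w a p q, |f w p - 2 * f w a + f w q| ≤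
      M * |w| * ((p - a) ^ 2 + (q - a) ^ 2 + |p - 2 * a + q|))
    (hf₁₁ : ∀ w w' a b, |(f w b - f w a) - (f w' b - f w' a)| ≤ B * |w - w'| * |b - a|)
    (hL : 0 ≤ L) (hM : 0 ≤ M) (hB : 0 ≤ B) (hlam : 0 ≤ lam) (hθ₀ : 0 ≤ θ) (hθ₁ : θ ≤ 1 / 2)
    (hρ : Summable fun l => |ρ l|) (hTV : Summable fun j => |ρ (j + 1) - ρ j|)
    (hAL : ∀ k, |AdiscL μ θ Δx ρ (k + 1) - AdiscL μ θ Δx ρ k| ≤ Y)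
    (hAR : ∀ k, |AdiscR μ θ Δx ρ (k + 1) - AdiscR μ θ Δx ρ k| ≤ Y)
    (hE : ∀ k, |Amid f μ θ lam Δx ρ (k + 1) - Amid f μ θ lam Δx ρ k| ≤ E)
    (hG : ∀ k, |Amid f μ θ lam Δx ρ (k + 1) - 2 * Amid f μ θ lam Δx ρ k
      + Amid f μ θ lam Δx ρ (k - 1)| ≤ G) :
    ∑' j, |Dterm f μ θ α lam Δx ρ j| ≤
      3 * M * (1 + lam * L) * (∑' l, |ρ l|) * (2 * E ^ 2 + G)
        + B * E * (2 * (1 + lam * L) * (∑' j, |ρ (j + 1) - ρ j|)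
          + 3 * lam * M * Y * ∑' l, |ρ l|) := by
  have hE₀ : 0 ≤ E := (abs_nonneg _).trans (hE 0)
  have hG₀ : 0 ≤ G := (abs_nonneg _).trans (hG 0)
  have hb := hasSum_two_mul_abs_add_abs_succ hρ
  have hb₁ := (Equiv.addRight (1 : ℤ)).hasSum_iff.mpr hb
  have hD := (hTV.hasSum.mul_left (2 * (1 + lam * L))).add (hb.mul_left (lam * M * Y))
  have hD₁ := (Equiv.subRight (1 : ℤ)).hasSum_iff.mpr hD
  have hdom := ((((hb.mul_left (1 + lam * L)).add (hb₁.mul_left (1 + lam * L))).mul_left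
    M).mul_right (2 * E ^ 2 + G) |>.add (((hD₁.add hD).mul_left B).mul_right E)).div_const 2
  refine (tsum_abs_le_of_hasSum hdom fun j => ?_).trans_eq (by ring)
  have hu := abs_midL_le (μ := μ) (Δx := Δx) hf₀ hL hlam hθ₀ hθ₁ (ρ := ρ) j
  have hv := abs_midR_le (μ := μ) (Δx := Δx) hf₀ hL hlam hθ₀ hθ₁ (ρ := ρ) (j + 1)
  have hdu := abs_midL_add_one_sub_le hf₁ hL hM hlam hθ₀ hθ₁ (j - 1) (hAL _) (hAR _)
  have hdv := abs_midR_add_one_sub_le hf₁ hL hM hlam hθ₀ hθ₁ j (hAL _) (hAR _)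
  rw [sub_add_cancel] at hdu
  refine (abs_Dterm_le hf₂ hf₁₁ hM hB hE hG j).trans ?_
  simp only [Function.comp_apply, Equiv.coe_addRight, Equiv.subRight_apply, sub_add_cancel]
  gcongr

end Corrector

theorem tsum_abs_Dterm_le {f : ℝ → ℝ → ℝ} {μ : ℝ → ℝ} {θ α lam Δx L M B C₀ C₁ C₂ m : ℝ}
    {ρ : ℤ → ℝ} (hμ : ∀ y, |μ y| ≤ C₀) (hμ₁ : ∀ y d, |μ (y + d) - μ y| ≤ C₁ * |d|)
    (hμ₂ : ∀ y d, |μ (y + 2 * d) - 2 * μ (y + d) + μ y| ≤ C₂ * d ^ 2)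
    (hf₀ : ∀ r A, |f r A| ≤ L * |r|)
    (hf₁ : ∀ r s a b, |f s b - f r a| ≤ L * |s - r| + M * |r| * |b - a|)
    (hf₂ : ∀ w a p q, |f w p - 2 * f w a + f w q| ≤
      M * |w| * ((p - a) ^ 2 + (q - a) ^ 2 + |p - 2 * a + q|))
    (hf₁₁ : ∀ w w' a b, |(f w b - f w a) - (f w' b - f w' a)| ≤ B * |w - w'| * |b - a|)
    (hL : 0 ≤ L) (hM : 0 ≤ M) (hB : 0 ≤ B) (hlam : 0 ≤ lam) (hθ₀ : 0 ≤ θ) (hθ₁ : θ ≤ 1 / 2)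
    (hΔx : 0 ≤ Δx) (hρ : Summable fun l => |ρ l|) (hTV : Summable fun j => |ρ (j + 1) - ρ j|)
    (hm : Δx * ∑' l, |ρ l| = m) :
    ∑' j, |Dterm f μ θ α lam Δx ρ j| ≤
      Δx * (9 * M * (1 + lam * L) ^ 2 * m ^ 2 * (6 * C₁ ^ 2 * (1 + lam * L) * m + C₂)
        + 18 * lam * B * M * C₁ ^ 2 * (1 + lam * L) * m ^ 3)
      + Δx * (6 * B * C₁ * (1 + lam * L) ^ 2 * m) * ∑' j, |ρ (j + 1) - ρ j| := by
  have hu := summable_abs_midL (μ := μ) (Δx := Δx) hf₀ hL hlam hθ₀ hθ₁ hρ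
  have hv := summable_abs_midR (μ := μ) (Δx := Δx) hf₀ hL hlam hθ₀ hθ₁ hρ
  have hU := tsum_abs_midL_le (μ := μ) (Δx := Δx) hf₀ hL hlam hθ₀ hθ₁ hρ
  have hV := tsum_abs_midR_le (μ := μ) (Δx := Δx) hf₀ hL hlam hθ₀ hθ₁ hρ
  have hA := abs_Adisc_add_one_sub_le hμ hμ₁ hρ hΔx
  refine (tsum_abs_Dterm_le_of_abs_Amid_le hf₀ hf₁ hf₂ hf₁₁ hL hM hB hlam hθ₀ hθ₁ hρ hTV
    (abs_AdiscL_add_one_sub_le hθ₀ hθ₁ hA) (abs_AdiscR_add_one_sub_le hθ₀ hθ₁ hA)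
    (abs_Amid_add_one_sub_le hμ hμ₁ hΔx hu hv hU hV)
    (abs_Amid_second_diff_le hμ hμ₂ hΔx hu hv hU hV)).trans_eq ?_
  rw [← hm]
  ring

theorem stmt19_general (f : ℝ → ℝ → ℝ) (μ : ℝ → ℝ) (lam θ L M B Cμ' Cμ'' m R : ℝ)
    (hf : ContDiff ℝ 2 (Function.uncurry f)) (hf0 : ∀ A : ℝ, f 0 A = 0)
    (hL : ∀ r A : ℝ, |deriv (fun x => f x A) r| ≤ L)
    (hdA : ∀ r a : ℝ, |deriv (f r) a| ≤ M * |r|)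
    (hdAA : ∀ r a : ℝ, |iteratedDeriv 2 (f r) a| ≤ M * |r|)
    (hBρA : ∀ r a : ℝ, |deriv (fun x => deriv (f x) a) r| ≤ B)
    (hμ : ContDiff ℝ 2 μ) (hμc : HasCompactSupport μ)
    (hCμ' : ∀ x : ℝ, |deriv μ x| ≤ Cμ')
    (hCμ'' : ∀ x : ℝ, |iteratedDeriv 2 μ x| ≤ Cμ'')
    (hθ0 : 0 ≤ θ) (hθ1 : θ ≤ 1 / 2) (hlam : 0 < lam) :
    ∃ K₇ K₈ : ℝ, 0 ≤ K₇ ∧ 0 ≤ K₈ ∧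
      ∀ (Δx Δt α : ℝ) (ρ : ℤ → ℝ),
        0 < Δx → Δx ≤ 1 → 0 < Δt → lam = Δt / Δx →
        0 < α → α < 8 / 27 →
        (∀ j : ℤ, 0 ≤ ρ j) → Summable ρ →
        Δx * (∑' l : ℤ, ρ l) = m →
        (∀ k : ℤ, ρ k ≤ R) →
        Summable (fun j : ℤ => |ρ (j + 1) - ρ j|) →
        lam * (∑' j : ℤ, |Dterm f μ θ α lam Δx ρ j|) ≤
          Δt * K₇ + Δt * K₈ * ∑' j : ℤ, |ρ (j + 1) - ρ j| := by
  have hL₀ : 0 ≤ L := (abs_nonneg _).trans (hL 0 0)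
  have hM₀ : 0 ≤ M := by simpa using (abs_nonneg _).trans (hdA 1 0)
  have hB₀ : 0 ≤ B := (abs_nonneg _).trans (hBρA 0 0)
  have hC₁ : 0 ≤ Cμ' := (abs_nonneg _).trans (hCμ' 0)
  have hC₂ : 0 ≤ Cμ'' := (abs_nonneg _).trans (hCμ'' 0)
  obtain ⟨C₀, hC₀⟩ := hμc.exists_bound_of_continuous hμ.continuous
  have hμd := hμ.differentiable two_ne_zero
  refine ⟨9 * M * (1 + lam * L) ^ 2 * |m| ^ 2 * (6 * Cμ' ^ 2 * (1 + lam * L) * |m| + 2 * Cμ'')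
      + 18 * lam * B * M * Cμ' ^ 2 * (1 + lam * L) * |m| ^ 3,
    6 * B * Cμ' * (1 + lam * L) ^ 2 * |m|, by positivity, by positivity, ?_⟩
  intro Δx Δt α ρ hΔx _ _ hlamΔ _ _ hρ₀ hρ hmass _ hTV
  have hm₀ : 0 ≤ m := hmass ▸ mul_nonneg hΔx.le (tsum_nonneg hρ₀)
  have hΔt : Δt = lam * Δx := by rw [hlamΔ]; field_simp
  have hD := tsum_abs_Dterm_le (α := α) (m := m) (fun y => by simpa using hC₀ y)
    (fun y d => by simpa using abs_sub_le_of_abs_deriv_le hμd hCμ' y (y + d))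
    (abs_second_diff_shift_le hμ hCμ' hCμ'') (abs_flux_le hf hf0 hL) (abs_flux_sub_le hf hL hdA)
    (abs_flux_second_diff_snd_le hf hdA hdAA) (abs_flux_mixed_diff_le hf hBρA)
    hL₀ hM₀ hB₀ hlam.le hθ0 hθ1 hΔx.le hρ.abs hTV
    (by rwa [tsum_congr fun l => abs_of_nonneg (hρ₀ l)])
  rw [abs_of_nonneg hm₀, hΔt]
  exact (mul_le_mul_of_nonneg_left hD hlam.le).trans_eq (by ring)

/-- summed bound on the corrector flux-difference terms. -/
theorem stmt19 (f : ℝ → ℝ → ℝ) (μ : ℝ → ℝ) (lam θ L M B Cμ' Cμ'' m R : ℝ)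
    (hf : ContDiff ℝ 2 (Function.uncurry f)) (hf0 : ∀ A : ℝ, f 0 A = 0)
    (hL : ∀ r A : ℝ, |deriv (fun x => f x A) r| ≤ L)
    (hM : 0 < M) (hdA : ∀ r a : ℝ, |deriv (f r) a| ≤ M * |r|)
    (hdAA : ∀ r a : ℝ, |iteratedDeriv 2 (f r) a| ≤ M * |r|)
    (hBρρ : ∀ r a : ℝ, |iteratedDeriv 2 (fun x => f x a) r| ≤ B)
    (hBρA : ∀ r a : ℝ, |deriv (fun x => deriv (f x) a) r| ≤ B)
    (hBAA : ∀ r a : ℝ, |iteratedDeriv 2 (f r) a| ≤ B)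
    (hμ : ContDiff ℝ 2 μ) (hμc : HasCompactSupport μ)
    (hCμ' : ∀ x : ℝ, |deriv μ x| ≤ Cμ')
    (hCμ'' : ∀ x : ℝ, |iteratedDeriv 2 μ x| ≤ Cμ'')
    (hθ0 : 0 ≤ θ) (hθ1 : θ ≤ 1 / 2) (hlam : 0 < lam) :
    ∃ K₇ K₈ : ℝ, 0 ≤ K₇ ∧ 0 ≤ K₈ ∧
      ∀ (Δx Δt α : ℝ) (ρ : ℤ → ℝ),
        0 < Δx → Δx ≤ 1 → 0 < Δt → lam = Δt / Δx →
        0 < α → α < 8 / 27 →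
        (∀ j : ℤ, 0 ≤ ρ j) → Summable ρ →
        Δx * (∑' l : ℤ, ρ l) = m →
        (∀ k : ℤ, ρ k ≤ R) →
        Summable (fun j : ℤ => |ρ (j + 1) - ρ j|) →
        lam * (∑' j : ℤ, |Dterm f μ θ α lam Δx ρ j|) ≤
          Δt * K₇ + Δt * K₈ * ∑' j : ℤ, |ρ (j + 1) - ρ j| :=
  stmt19_general f μ lam θ L M B Cμ' Cμ'' m R hf hf0 hL hdA hdAA hBρA hμ hμc hCμ' hCμ'' hθ0 hθ1 hlam
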